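/- Assume in addition that N is closed under the shift functor and its inverse (X ∈ N if and only if X⟦1⟧ ∈ N), so that N is a thick triangulated subcategory of C. Then a morphism s: B ⟶ C belongs to S_N if and only if there exists a distinguished triangle B ⟶s C ⟶ Z ⟶ B⟦1⟧ with Z ∈ N (i.e., s lies in the class of morphisms inverted by the Verdier quotient C ⟶ C/N). -/

import Mathlib

open CategoryTheory CategoryTheory.Limits CategoryTheory.Pretriangulated

universe v u v₂ u₂

variable {C : Type u} [Category.{v} C] [Preadditive C] [HasZeroObject C]
  [HasShift C ℤ] [∀ n : ℤ, (shiftFunctor C n).Additive] [Pretriangulated C]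

/-- `f : X ⟶ Y` factors through an object of `N`. -/
def FactorsThru (N : Set C) {X Y : C} (f : X ⟶ Y) : Prop :=
  ∃ (Z : C) (_ : Z ∈ N) (u : X ⟶ Z) (v : Z ⟶ Y), f = u ≫ v

/-- The morphism `X⟦-1⟧ ⟶ A` obtained from `h : X ⟶ A⟦1⟧` by shifting by `-1` and
composing with the canonical isomorphism `A⟦1⟧⟦-1⟧ ≅ A`. -/
noncomputable def descShift {X A : C} (h : X ⟶ A⟦(1:ℤ)⟧) : X⟦(-1:ℤ)⟧ ⟶ A :=
  h⟦(-1:ℤ)⟧' ≫ (shiftEquiv C (1:ℤ)).unitIso.inv.app A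

/-- The class `S_N` of morphisms fitting in a distinguished triangle whose two other
maps factor through `N`. -/
def SN (N : Set C) {B C₀ : C} (g : B ⟶ C₀) : Prop :=
  ∃ (A : C) (f : A ⟶ B) (h : C₀ ⟶ A⟦(1:ℤ)⟧),
    (Triangle.mk f g h ∈ distTriang C) ∧ FactorsThru N f ∧ FactorsThru N h

/-- The class `L`. -/
def ClassL (N : Set C) {A B : C} (f : A ⟶ B) : Prop :=
  ∃ (N₀ : C) (_ : N₀ ∈ N) (g : B ⟶ N₀) (h : N₀ ⟶ A⟦(1:ℤ)⟧),
    (Triangle.mk f g h ∈ distTriang C) ∧ FactorsThru N (descShift h)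

/-- The class `R`. -/
def ClassR (N : Set C) {B C₀ : C} (g : B ⟶ C₀) : Prop :=
  ∃ (N₀ : C) (_ : N₀ ∈ N) (f : N₀ ⟶ B) (h : C₀ ⟶ N₀⟦(1:ℤ)⟧),
    (Triangle.mk f g h ∈ distTriang C) ∧ FactorsThru N h

/-- Condition (Lex) on a morphism `h : C₀ ⟶ A⟦1⟧`. -/
def LexCond (N : Set C) {C₀ A : C} (h : C₀ ⟶ A⟦(1:ℤ)⟧) : Prop :=
  ∀ (N₀ : C), N₀ ∈ N → ∀ (x : N₀ ⟶ C₀), FactorsThru N (descShift (x ≫ h))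

/-- Condition (Rex) on a morphism `h : C₀ ⟶ A⟦1⟧`. -/
def RexCond (N : Set C) {C₀ A : C} (h : C₀ ⟶ A⟦(1:ℤ)⟧) : Prop :=
  ∀ (N₀ : C), N₀ ∈ N → ∀ (y : A ⟶ N₀),
    ∃ (M : C) (_ : M ∈ N) (u : C₀⟦(-1:ℤ)⟧ ⟶ M⟦(-1:ℤ)⟧) (v : M⟦(-1:ℤ)⟧ ⟶ N₀),
      descShift h ≫ y = u ≫ v

/-- `S_N` as a morphism property. -/
def SNProp (N : Set C) : MorphismProperty C := fun _ _ g => SN N g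

/-! If `A ⟶ B ⟶ C₀ ⟶ A⟦1⟧` has first and third maps factoring through `N`, rotating it puts `A`
between two maps factoring through `N`, say `X ⟶ P ⟶ A` and `A ⟶ Q ⟶ B`. The cone `K` of
`P ⟶ A` then receives a map `A ⟶ K` factoring through `Q ⟶ B`, and a cone whose structure map
factors through `N` is a retract of an object of `N`; so `K ∈ N`, and `A`, an extension of `P`
and `K`, lies in `N`. Conversely, the inverse rotation of `B ⟶ C₀ ⟶ Z ⟶ B⟦1⟧` with `Z ∈ N`
witnesses `S_N`. -/

lemma factorsThru_invRotate_mor₁ {D : Type*} [Category D] [Preadditive D] [HasShift D ℤ]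
    {N : Set D} (hN : ∀ X : D, X ∈ N → (X⟦(-1:ℤ)⟧ : D) ∈ N)
    {A B C₀ : D} {f : A ⟶ B} {g : B ⟶ C₀} {h : C₀ ⟶ A⟦(1:ℤ)⟧} (hh : FactorsThru N h) :
    FactorsThru N (Triangle.mk f g h).invRotate.mor₁ := by
  obtain ⟨P, hP, a, b, rfl⟩ := hh
  refine ⟨P⟦(-1:ℤ)⟧, hN P hP, -a⟦(-1:ℤ)⟧', b⟦(-1:ℤ)⟧' ≫ (shiftEquiv D (1:ℤ)).unitIso.inv.app A, ?_⟩
  change -(a ≫ b)⟦(-1:ℤ)⟧' ≫ (shiftEquiv D (1:ℤ)).unitIso.inv.app A = _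
  erw [Functor.map_comp, Preadditive.neg_comp, Category.assoc]
  rfl

section

variable {N : Set C}

lemma mem_obj₃_of_factorsThru_mor₂
    (hNsum : ∀ ⦃X Z : C⦄ (i : X ⟶ Z) (r : Z ⟶ X), i ≫ r = 𝟙 X → Z ∈ N → X ∈ N)
    (hNext : ∀ (T : Triangle C), (T ∈ distTriang C) → T.obj₁ ∈ N → T.obj₃ ∈ N → T.obj₂ ∈ N)
    {X A K : C} {w : X ⟶ A} {k : A ⟶ K} {l : K ⟶ X⟦(1:ℤ)⟧}
    (hT : Triangle.mk w k l ∈ distTriang C) (hX : (X⟦(1:ℤ)⟧ : C) ∈ N) (hk : FactorsThru N k) :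
    K ∈ N := by
  obtain ⟨P, hP, u, v, rfl⟩ := hk
  obtain ⟨M, i, j, hM⟩ := distinguished_cocone_triangle (w ≫ u)
  have hMN : M ∈ N := hNext _ (rot_of_distTriang _ hM) hP hX
  obtain ⟨t, ht, -⟩ := complete_distinguished_triangle_morphism _ _ hT hM (𝟙 X) u
    (Category.id_comp _).symm
  change K ⟶ M at t
  obtain ⟨ρ, hρ⟩ := Triangle.yoneda_exact₂ _ hM v (by
    change (w ≫ u) ≫ v = 0
    rw [Category.assoc]
    exact comp_distTriang_mor_zero₁₂ _ hT)
  change M ⟶ K at ρ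
  obtain ⟨σ, hσ⟩ := Triangle.yoneda_exact₃ _ hT (𝟙 K - t ≫ ρ) (by
    change (u ≫ v) ≫ t = u ≫ i at ht
    change v = i ≫ ρ at hρ
    change (u ≫ v) ≫ (𝟙 K - t ≫ ρ) = 0
    rw [Preadditive.comp_sub, Category.comp_id, ← Category.assoc (u ≫ v), ht, Category.assoc,
      ← hρ, sub_self])
  change X⟦(1:ℤ)⟧ ⟶ K at σ
  change 𝟙 K - t ≫ ρ = l ≫ σ at hσ
  -- `𝟙 K - t ≫ ρ` kills `k`, hence factors through `l`: `K` is a retract of `M ⊞ X⟦1⟧`.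
  refine hNsum (biprod.lift t l) (biprod.desc ρ σ) ?_
    (hNext _ (binaryBiproductTriangle_distinguished M _) hMN hX)
  rw [biprod.lift_desc, ← hσ, add_sub_cancel]

lemma mem_obj₂_of_factorsThru_mor₁_mor₂
    (hNsum : ∀ ⦃X Z : C⦄ (i : X ⟶ Z) (r : Z ⟶ X), i ≫ r = 𝟙 X → Z ∈ N → X ∈ N)
    (hNext : ∀ (T : Triangle C), (T ∈ distTriang C) → T.obj₁ ∈ N → T.obj₃ ∈ N → T.obj₂ ∈ N)
    (hN : ∀ X : C, X ∈ N → (X⟦(1:ℤ)⟧ : C) ∈ N)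
    {X Y Z : C} {g : X ⟶ Y} {f : Y ⟶ Z} {e : Z ⟶ X⟦(1:ℤ)⟧}
    (hT : Triangle.mk g f e ∈ distTriang C) (hg : FactorsThru N g) (hf : FactorsThru N f) :
    Y ∈ N := by
  obtain ⟨P, hP, a, b, rfl⟩ := hg
  obtain ⟨K, k, l, hK⟩ := distinguished_cocone_triangle b
  obtain ⟨m, hm, -⟩ := complete_distinguished_triangle_morphism _ _ hT hK a (𝟙 Y)
    (Category.comp_id _)
  change Z ⟶ K at m
  have hk : FactorsThru N k := by
    obtain ⟨Q, hQ, u, v, rfl⟩ := hf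
    change (u ≫ v) ≫ m = 𝟙 Y ≫ k at hm
    exact ⟨Q, hQ, u, v ≫ m, by rw [← Category.assoc, hm, Category.id_comp]⟩
  exact hNext _ hK hP (mem_obj₃_of_factorsThru_mor₂ hNsum hNext hK (hN P hP) hk)

end

theorem stmt14 (N : Set C)
    (hNsum : ∀ ⦃X Z : C⦄ (i : X ⟶ Z) (r : Z ⟶ X), i ≫ r = 𝟙 X → Z ∈ N → X ∈ N)
    (hNext : ∀ (T : Triangle C), (T ∈ distTriang C) → T.obj₁ ∈ N → T.obj₃ ∈ N → T.obj₂ ∈ N)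
    (hshift : ∀ X : C, X ∈ N ↔ (X⟦(1:ℤ)⟧ : C) ∈ N)
    {B C₀ : C} (s : B ⟶ C₀) :
    SN N s ↔
      ∃ (Z : C) (_ : Z ∈ N) (p : C₀ ⟶ Z) (q : Z ⟶ B⟦(1:ℤ)⟧),
        Triangle.mk s p q ∈ distTriang C := by
  have hNneg : ∀ X : C, X ∈ N → (X⟦(-1:ℤ)⟧ : C) ∈ N := fun X hX =>
    let e := (shiftEquiv C (1:ℤ)).counitIso.app X
    (hshift _).2 (hNsum e.hom e.inv e.hom_inv_id hX)
  constructor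
  · rintro ⟨A, f, h, hT, hf, hh⟩
    have hA : A ∈ N := mem_obj₂_of_factorsThru_mor₁_mor₂ hNsum hNext (fun X => (hshift X).1)
      (inv_rot_of_distTriang _ hT) (factorsThru_invRotate_mor₁ hNneg hh) hf
    exact ⟨A⟦(1:ℤ)⟧, (hshift A).1 hA, h, -f⟦(1:ℤ)⟧', rot_of_distTriang _ hT⟩
  · rintro ⟨Z, hZ, p, q, hT⟩
    exact ⟨_, _, _, inv_rot_of_distTriang _ hT, ⟨_, hNneg Z hZ, 𝟙 _, _, (Category.id_comp _).symm⟩,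
      ⟨Z, hZ, p, _, rfl⟩⟩
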